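/- arXiv:2602.12350 — 2 statements merged into one kernel-verified Lean document; each statement's English description precedes it below -/
import Mathlib

section
/- In the 2-step verification model of sequencing with precedence and deadlines, deadline adjustment preserves feasibility: let T be a finite set of tasks with lengths ℓ : T → ℕ₊, a partial (strict) order ≺ on T, and deadlines d : T → ℕ. Suppose all tasks of T can be scheduled sequentially (a bijection σ : T → {1,…,|T|} with σ respecting ≺) such that each task finishes by its deadline (Σ_{σ(t') ≤ σ(t)} ℓ(t') ≤ d(t) for all t). Then the same holds for the adjusted deadlines d'(t) = min(d(t), min{d'(t') − ℓ(t') : t ≺ t'}) (computed from maximal elements downward), and conversely; moreover, scheduling tasks in nondecreasing order of the adjusted deadlines d' yields a feasible schedule whenever one exists. -/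
/-- A schedule (a bijection of tasks to positions) is feasible w.r.t. a precedence
relation `prec`, lengths `ℓ` and deadlines `e` if it respects the precedence and
every task completes by its deadline. -/
def IsFeasibleSchedule {T : Type*} [Fintype T] (prec : T → T → Prop)
    (ℓ : T → ℕ) (e : T → ℕ) (σ : T ≃ Fin (Fintype.card T)) : Prop :=
  (∀ t t', prec t t' → σ t < σ t') ∧
  ∀ t, (∑ t' ∈ Finset.univ.filter (fun t' => σ t' ≤ σ t), ℓ t') ≤ e t

/-- Deadline adjustment preserves feasibility, and scheduling in
nondecreasing order of the adjusted deadlines `d'` yields a feasible schedule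
whenever one exists. Here `d'` is the largest pointwise function with `d' ≤ d`
and `d' t + ℓ t' ≤ d' t'` whenever `t ≺ t'`. -/
theorem stmt_16 {T : Type*} [Fintype T] (prec : T → T → Prop)
    (htrans : Transitive prec) (hirr : Irreflexive prec)
    (ℓ : T → ℕ) (hℓ : ∀ t, 0 < ℓ t) (d d' : T → ℕ)
    (hd'le : ∀ t, d' t ≤ d t)
    (hd'prec : ∀ t t', prec t t' → d' t + ℓ t' ≤ d' t')
    (hd'max : ∀ e : T → ℕ, (∀ t, e t ≤ d t) →
      (∀ t t', prec t t' → e t + ℓ t' ≤ e t') → ∀ t, e t ≤ d' t) :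
    ((∃ σ, IsFeasibleSchedule prec ℓ d σ) ↔ (∃ σ, IsFeasibleSchedule prec ℓ d' σ)) ∧
    (∀ σ : T ≃ Fin (Fintype.card T), (∃ τ, IsFeasibleSchedule prec ℓ d τ) →
      (∀ t t', σ t < σ t' → d' t ≤ d' t') → IsFeasibleSchedule prec ℓ d σ) := by
  classical
  -- Key: any schedule feasible for `d` is feasible for `d'`.
  have key : ∀ σ : T ≃ Fin (Fintype.card T), IsFeasibleSchedule prec ℓ d σ →
      IsFeasibleSchedule prec ℓ d' σ := by
    rintro σ ⟨h1, h2⟩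
    refine ⟨h1, hd'max _ h2 ?_⟩
    intro t t' hp
    have hlt := h1 t t' hp
    have hnot : t' ∉ Finset.univ.filter (fun s => σ s ≤ σ t) := by
      simp only [Finset.mem_filter, Finset.mem_univ, true_and]
      exact not_le.mpr hlt
    have hsub : insert t' (Finset.univ.filter (fun s => σ s ≤ σ t)) ⊆
        Finset.univ.filter (fun s => σ s ≤ σ t') := by
      intro s hs
      simp only [Finset.mem_insert, Finset.mem_filter, Finset.mem_univ, true_and] at hs ⊢
      rcases hs with rfl | hs
      · exact le_refl _
      · exact le_trans hs hlt.le
    calc (∑ s ∈ Finset.univ.filter (fun s => σ s ≤ σ t), ℓ s) + ℓ t'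
        = ∑ s ∈ insert t' (Finset.univ.filter (fun s => σ s ≤ σ t)), ℓ s := by
          rw [Finset.sum_insert hnot]; ring
      _ ≤ _ := Finset.sum_le_sum_of_subset hsub
  constructor
  · constructor
    · rintro ⟨σ, hσ⟩; exact ⟨σ, key σ hσ⟩
    · rintro ⟨σ, h1, h2⟩; exact ⟨σ, h1, fun t => (h2 t).trans (hd'le t)⟩
  · rintro σ ⟨τ, hτ⟩ hsort
    obtain ⟨hτ1, hτ2⟩ := key τ hτ
    constructor
    · intro t t' hp
      have hdlt : d' t < d' t' :=
        lt_of_lt_of_le (Nat.lt_add_of_pos_right (hℓ t')) (hd'prec t t' hp)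
      rcases lt_trichotomy (σ t) (σ t') with h | h | h
      · exact h
      · exact absurd (σ.injective h ▸ hp) (hirr t')
      · exact absurd (hsort t' t h) (not_le.mpr hdlt)
    · intro t
      have htS : t ∈ Finset.univ.filter (fun s => σ s ≤ σ t) := by simp
      obtain ⟨u, huS, hu⟩ := Finset.exists_max_image
        (Finset.univ.filter (fun s => σ s ≤ σ t)) (fun s => τ s) ⟨t, htS⟩
      have hsub : Finset.univ.filter (fun s => σ s ≤ σ t) ⊆
          Finset.univ.filter (fun s => τ s ≤ τ u) := by
        intro s hs
        simp only [Finset.mem_filter, Finset.mem_univ, true_and]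
        exact hu s hs
      have hut : d' u ≤ d' t := by
        have hle : σ u ≤ σ t := by
          simpa using huS
        rcases lt_or_eq_of_le hle with h | h
        · exact hsort u t h
        · rw [σ.injective h]
      calc (∑ s ∈ Finset.univ.filter (fun s => σ s ≤ σ t), ℓ s)
          ≤ ∑ s ∈ Finset.univ.filter (fun s => τ s ≤ τ u), ℓ s :=
            Finset.sum_le_sum_of_subset hsub
        _ ≤ d' u := hτ2 u
        _ ≤ d' t := hut
        _ ≤ d t := hd'le t
end

section
/- EDD (earliest-due-date) optimality without precedence: if tasks t₁,…,tₙ with positive lengths ℓᵢ and deadlines dᵢ can be ordered so that each completes by its deadline, then ordering them by nondecreasing deadline also lets every task complete by its deadline. Formally, if there is a permutation π with Σ_{j≤i} ℓ_{π(j)} ≤ d_{π(i)} for all i, then for any permutation τ sorting the deadlines nondecreasingly, Σ_{j≤i} ℓ_{τ(j)} ≤ d_{τ(i)} for all i. -/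
/-- EDD optimality without precedence: if some processing order meets
all deadlines, then any order sorting the deadlines nondecreasingly does as well. -/
theorem stmt_17 {n : ℕ} (ℓ d : Fin n → ℕ) (hℓ : ∀ i, 0 < ℓ i)
    (π τ : Equiv.Perm (Fin n))
    (hπ : ∀ i, ∑ j ∈ Finset.Iic i, ℓ (π j) ≤ d (π i))
    (hτ : ∀ i j, i ≤ j → d (τ i) ≤ d (τ j)) :
    ∀ i, ∑ j ∈ Finset.Iic i, ℓ (τ j) ≤ d (τ i) := by
  classical
  intro i
  set f : Fin n → Fin n := fun j => π.symm (τ j) with hf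
  have hfinj : Function.Injective f := π.symm.injective.comp τ.injective
  obtain ⟨j₀, hj₀, hk⟩ := (Finset.Iic i).exists_max_image f ⟨i, Finset.mem_Iic.2 le_rfl⟩
  set k := f j₀ with hkdef
  have hsub : (Finset.Iic i).image f ⊆ Finset.Iic k := by
    intro x hx
    obtain ⟨j, hj, rfl⟩ := Finset.mem_image.1 hx
    exact Finset.mem_Iic.2 (hk j hj)
  have h1 : ∑ j ∈ Finset.Iic i, ℓ (τ j) = ∑ x ∈ (Finset.Iic i).image f, ℓ (π x) := by
    rw [Finset.sum_image (fun a _ b _ h => hfinj h)]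
    simp [hf]
  have h2 : ∑ x ∈ (Finset.Iic i).image f, ℓ (π x) ≤ ∑ x ∈ Finset.Iic k, ℓ (π x) :=
    Finset.sum_le_sum_of_subset hsub
  have h3 : d (π k) ≤ d (τ i) := by
    have : π k = τ j₀ := by simp [hkdef, hf]
    rw [this]
    exact hτ j₀ i (Finset.mem_Iic.1 hj₀)
  calc ∑ j ∈ Finset.Iic i, ℓ (τ j) = ∑ x ∈ (Finset.Iic i).image f, ℓ (π x) := h1
    _ ≤ ∑ x ∈ Finset.Iic k, ℓ (π x) := h2
    _ ≤ d (π k) := hπ k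
    _ ≤ d (τ i) := h3
end
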